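/- The Schrödinger equation of motion on the Hilbert space is μ-related to the Heisenberg equation of motion: if H is a Hermitian n×n complex matrix, ħ > 0, ψ₀ ∈ ℂⁿ, and ψ(t) = exp(−(i/ħ) t H) ψ₀, then the curve of rank-one operators ρ(t) = ρ_{ψ(t)} is differentiable and satisfies the Heisenberg equation dρ/dt = −(i/ħ)(H ρ(t) − ρ(t) H). -/

import Mathlib

/-! With `B = -(i/ħ) H`, the curve `ψ` solves `ψ' = B ψ`, so the product rule for `ρ = ψ ψ*` gives
`ρ' = B ρ + ρ Bᴴ`; since `H` is Hermitian and `-(i/ħ)` is purely imaginary, `Bᴴ = -B`. -/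

open NormedSpace Matrix

section

variable {m 𝕜 : Type*} [RCLike 𝕜]

theorem hasDerivAt_exp_smul_mulVec [Fintype m] [DecidableEq m] (B : Matrix m m 𝕜) (v : m → 𝕜)
    (t : ℝ) :
    HasDerivAt (fun u : ℝ => exp (u • B) *ᵥ v) (B *ᵥ (exp (t • B) *ᵥ v)) t := by
  let _ := Matrix.linftyOpNormedRing (n := m) (α := 𝕜)
  let _ := Matrix.linftyOpNormedAlgebra (R := ℝ) (n := m) (α := 𝕜)
  let applyTo : Matrix m m 𝕜 →ₗ[ℝ] m → 𝕜 :=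
    { toFun := fun M => M *ᵥ v
      map_add' := fun M N => add_mulVec M N v
      map_smul' := fun c M => smul_mulVec c M v }
  rw [mulVec_mulVec]
  exact applyTo.toContinuousLinearMap.hasFDerivAt.comp_hasDerivAt t
    (hasDerivAt_exp_smul_const' B t)

theorem HasDerivAt.vecMulVec {n : Type*} [Fintype m] [Fintype n] {w : ℝ → m → 𝕜}
    {v : ℝ → n → 𝕜} {w' : m → 𝕜} {v' : n → 𝕜} {t : ℝ}
    (hw : HasDerivAt w w' t) (hv : HasDerivAt v v' t) :
    HasDerivAt (fun u => vecMulVec (w u) (v u)) (vecMulVec w' (v t) + vecMulVec (w t) v') t :=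
  hasDerivAt_pi.2 fun i => hasDerivAt_pi.2 fun j =>
    (hasDerivAt_pi.1 hw i).mul (hasDerivAt_pi.1 hv j)

theorem HasDerivAt.vecMulVec_star_of_mulVec [Fintype m] {ψ : ℝ → m → 𝕜} {B : Matrix m m 𝕜}
    {t : ℝ} (hψ : HasDerivAt ψ (B *ᵥ ψ t) t) :
    HasDerivAt (fun u => Matrix.vecMulVec (ψ u) (star (ψ u)))
      (B * Matrix.vecMulVec (ψ t) (star (ψ t)) + Matrix.vecMulVec (ψ t) (star (ψ t)) * Bᴴ) t := by
  rw [mul_vecMulVec, vecMulVec_mul, ← star_mulVec]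
  exact hψ.vecMulVec hψ.star

end

theorem schrodinger_heisenberg_mu_related_general {n : ℕ} (Hm : Matrix (Fin n) (Fin n) ℂ)
    (hHm : Hm.IsHermitian) (hbar : ℝ) (ψ₀ : Fin n → ℂ)
    (ψ : ℝ → Fin n → ℂ)
    (hψ : ψ = fun (t : ℝ) => (exp (((-Complex.I * (t : ℂ)) / (hbar : ℂ)) • Hm)).mulVec ψ₀)
    (ρ : ℝ → Matrix (Fin n) (Fin n) ℂ)
    (hρ : ρ = fun t => Matrix.of fun i j => ψ t i * (starRingEnd ℂ) (ψ t j)) :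
    ∀ t : ℝ, HasDerivAt ρ (((-Complex.I) / (hbar : ℂ)) • (Hm * ρ t - ρ t * Hm)) t := by
  intro t
  set c : ℂ := -Complex.I / hbar
  have hψB : ψ = fun u : ℝ => exp (u • c • Hm) *ᵥ ψ₀ := by
    rw [hψ]
    ext u : 1
    rw [← smul_assoc, Complex.real_smul]
    congr 3
    ring
  have hρψ : ρ = fun u => vecMulVec (ψ u) (star (ψ u)) := hρ
  have hc : star c = -c := by simp [c, neg_div]
  have hB : (c • Hm)ᴴ = -(c • Hm) := by rw [conjTranspose_smul, hc, hHm.eq, neg_smul]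
  have hψ' : HasDerivAt ψ ((c • Hm) *ᵥ ψ t) t := by
    rw [hψB]
    exact hasDerivAt_exp_smul_mulVec _ ψ₀ t
  subst hρψ
  convert HasDerivAt.vecMulVec_star_of_mulVec hψ' using 1
  rw [hB, mul_neg, ← sub_eq_add_neg, smul_mul_assoc, mul_smul_comm, smul_sub]

/-- The Schrödinger evolution on the Hilbert space is μ-related to the Heisenberg equation:
for a Hermitian matrix `H`, `ħ > 0`, and `ψ t = exp(-(i/ħ) t H) ψ₀`, the curve of rank-one
operators `ρ t = |ψ t⟩⟨ψ t|` satisfies `dρ/dt = -(i/ħ)(H ρ - ρ H)`. -/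
theorem schrodinger_heisenberg_mu_related {n : ℕ} (Hm : Matrix (Fin n) (Fin n) ℂ)
    (hHm : Hm.IsHermitian) (hbar : ℝ) (hhbar : 0 < hbar) (ψ₀ : Fin n → ℂ)
    (ψ : ℝ → Fin n → ℂ)
    (hψ : ψ = fun (t : ℝ) => (exp (((-Complex.I * (t : ℂ)) / (hbar : ℂ)) • Hm)).mulVec ψ₀)
    (ρ : ℝ → Matrix (Fin n) (Fin n) ℂ)
    (hρ : ρ = fun t => Matrix.of fun i j => ψ t i * (starRingEnd ℂ) (ψ t j)) :
    ∀ t : ℝ, HasDerivAt ρ (((-Complex.I) / (hbar : ℂ)) • (Hm * ρ t - ρ t * Hm)) t :=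
  schrodinger_heisenberg_mu_related_general Hm hHm hbar ψ₀ ψ hψ ρ hρ
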